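/- Each Hermite function φ_n is an eigenfunction of the unitary Fourier transform with eigenvalue (-i)^n: F[φ_n](ω) = (-i)^n φ_n(ω). -/

import Mathlib

open MeasureTheory

/-- Normalized Hermite functions: `φ_0(x) = π^{-1/4} e^{-x²/2}`,
`φ_{n+1} = (2(n+1))^{-1/2} (x φ_n - φ_n')`. -/
noncomputable def hermiteFun : ℕ → ℝ → ℝ
  | 0 => fun x => Real.pi ^ (-(1 : ℝ)/4) * Real.exp (-x ^ 2 / 2)
  | n + 1 => fun x =>
      (Real.sqrt (2 * (n + 1)))⁻¹ * (x * hermiteFun n x - deriv (hermiteFun n) x)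

/-- Unitary Fourier transform `F[f](ω) = (2π)^{-1/2} ∫ f(t) e^{-iωt} dt`. -/
noncomputable def fourierT (f : ℝ → ℂ) (ω : ℝ) : ℂ :=
  ((Real.sqrt (2 * Real.pi) : ℝ) : ℂ)⁻¹ *
    ∫ t : ℝ, f t * Complex.exp (-Complex.I * ω * t)

/-!
The Fourier transform turns `d/dx` into multiplication by `iω` and multiplication by `x` into
`i d/dω`, so it intertwines the creation operator `x - d/dx` with `-i` times itself. The Gaussian
`φ₀` is fixed by the Fourier transform, and `φₙ` is a multiple of the `n`-th power of the creation
operator applied to `φ₀`, so `φₙ` is an eigenfunction with eigenvalue `(-i)ⁿ`. Each `φₙ` is a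
polynomial times the Gaussian, which supplies the integrability these Fourier identities need.
-/

open Real
open Complex (I)
open scoped FourierTransform

lemma fourier_const_mul (c : ℂ) (f : ℝ → ℂ) (w : ℝ) :
    𝓕 (fun x => c * f x) w = c * 𝓕 f w :=
  congrFun (VectorFourier.fourierIntegral_const_smul _ _ _ f c) w

section fourierT

variable {f g : ℝ → ℂ}

lemma fourierT_eq_fourier (f : ℝ → ℂ) (ω : ℝ) :
    fourierT f ω = ((√(2 * π) : ℝ) : ℂ)⁻¹ * 𝓕 f (ω / (2 * π)) := by
  rw [fourierT, Real.fourier_real_eq_integral_exp_smul]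
  congr 2 with t
  rw [smul_eq_mul, mul_comm]
  congr 2
  push_cast
  field_simp

lemma fourierT_const_mul (c : ℂ) (f : ℝ → ℂ) (ω : ℝ) :
    fourierT (fun t => c * f t) ω = c * fourierT f ω := by
  simp only [fourierT, mul_assoc, integral_const_mul]
  ring

lemma fourierT_sub (hf : Integrable f) (hg : Integrable g) (ω : ℝ) :
    fourierT (fun t => f t - g t) ω = fourierT f ω - fourierT g ω := by
  have hintegrand {h : ℝ → ℂ} (hh : Integrable h) :
      Integrable fun t : ℝ => h t * Complex.exp (-I * ω * t) := by
    refine hh.mul_bdd (c := 1) (by fun_prop : Continuous _).aestronglyMeasurable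
      (ae_of_all _ fun t => le_of_eq ?_)
    rw [Complex.norm_exp]
    simp
  simp only [fourierT, sub_mul, integral_sub (hintegrand hf) (hintegrand hg), mul_sub]

lemma fourierT_deriv (hf : Integrable f) (hdf : Differentiable ℝ f) (hf' : Integrable (deriv f))
    (ω : ℝ) : fourierT (deriv f) ω = I * ω * fourierT f ω := by
  rw [fourierT_eq_fourier, fourierT_eq_fourier, Real.fourier_deriv hf hdf hf']
  simp only [smul_eq_mul]
  push_cast
  field_simp

lemma hasDerivAt_fourierT (hf : Integrable f) (hxf : Integrable fun x : ℝ => (x : ℂ) * f x)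
    (ω : ℝ) : HasDerivAt (fourierT f) (-I * fourierT (fun x => x * f x) ω) ω := by
  have hscale : HasDerivAt (fun w : ℝ => w / (2 * π)) (2 * π)⁻¹ ω := by
    simpa using (hasDerivAt_id ω).div_const (2 * π)
  have hF := Real.hasDerivAt_fourier hf (by simpa only [Complex.real_smul] using hxf) (ω / (2 * π))
  have hmul : (fun x : ℝ => (-2 * π * I * x) • f x) = fun x => (-2 * π * I) * (x * f x) :=
    funext fun x => by rw [smul_eq_mul, mul_assoc]
  have hT : fourierT f = fun w => ((√(2 * π) : ℝ) : ℂ)⁻¹ * 𝓕 f (w / (2 * π)) :=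
    funext (fourierT_eq_fourier f)
  rw [hmul, fourier_const_mul] at hF
  rw [hT, fourierT_eq_fourier]
  refine ((hF.scomp ω hscale).const_mul ((√(2 * π) : ℝ) : ℂ)⁻¹).congr_deriv ?_
  rw [Complex.real_smul]
  push_cast
  field_simp

lemma fourierT_creation (hf : Integrable f) (hdf : Differentiable ℝ f)
    (hf' : Integrable (deriv f)) (hxf : Integrable fun x : ℝ => (x : ℂ) * f x) (ω : ℝ) :
    fourierT (fun x => x * f x - deriv f x) ω
      = -I * (ω * fourierT f ω - deriv (fourierT f) ω) := by
  rw [fourierT_sub hxf hf', fourierT_deriv hf hdf hf', (hasDerivAt_fourierT hf hxf ω).deriv]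
  linear_combination fourierT (fun x => x * f x) ω * Complex.I_sq

lemma fourierT_ofReal_creation {φ : ℝ → ℝ} (hφ : Integrable φ) (hdφ : Differentiable ℝ φ)
    (hφ' : Integrable (deriv φ)) (hxφ : Integrable fun x => x * φ x) (ω : ℝ) :
    fourierT (fun x => ((x * φ x - deriv φ x : ℝ) : ℂ)) ω
      = -I * (ω * fourierT (fun x => (φ x : ℂ)) ω - deriv (fourierT fun x => (φ x : ℂ)) ω) := by
  have hderiv : deriv (fun x => (φ x : ℂ)) = fun x => ((deriv φ x : ℝ) : ℂ) :=
    funext fun x => (hdφ x).hasDerivAt.ofReal_comp.deriv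
  have hdf : Differentiable ℝ fun x => (φ x : ℂ) :=
    fun x => (hdφ x).hasDerivAt.ofReal_comp.differentiableAt
  have h := fourierT_creation (f := fun x => (φ x : ℂ)) hφ.ofReal hdf (hderiv ▸ hφ'.ofReal)
    (by simpa using hxφ.ofReal (𝕜 := ℂ)) ω
  simp only [hderiv] at h
  push_cast
  exact h

lemma fourierT_gaussian (ω : ℝ) :
    fourierT (fun t => (exp (-t ^ 2 / 2) : ℂ)) ω = exp (-ω ^ 2 / 2) := by
  have hintegrand (t : ℝ) : (exp (-t ^ 2 / 2) : ℂ) * Complex.exp (-I * ω * t)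
      = Complex.exp (I * ↑(-ω) * t) * Complex.exp (-(1 / 2) * t ^ 2) := by
    rw [Complex.ofReal_exp, ← Complex.exp_add, ← Complex.exp_add]
    push_cast
    ring_nf
  have hsqrt : ((π : ℂ) / (1 / 2)) ^ (1 / 2 : ℂ) = ((√(2 * π) : ℝ) : ℂ) := by
    rw [sqrt_eq_rpow, Complex.ofReal_cpow (by positivity)]
    push_cast
    ring_nf
  have hsqrt_ne : ((√(2 * π) : ℝ) : ℂ) ≠ 0 := by
    exact_mod_cast (sqrt_pos.2 (by positivity)).ne'
  rw [fourierT, funext hintegrand, fourierIntegral_gaussian (by norm_num), hsqrt,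
    inv_mul_cancel_left₀ hsqrt_ne, Complex.ofReal_exp]
  push_cast
  ring_nf

end fourierT

lemma integrable_pow_mul_exp_neg_sq_div_two (k : ℕ) :
    Integrable fun x : ℝ => x ^ k * exp (-x ^ 2 / 2) := by
  have := integrable_rpow_mul_exp_neg_mul_sq (b := 1 / 2) (by norm_num) (s := k)
    (by linarith [(Nat.cast_nonneg k : (0 : ℝ) ≤ k)])
  refine this.congr (Filter.Eventually.of_forall fun x => ?_)
  simp only [rpow_natCast]
  ring_nf

section

open Polynomial

noncomputable def polyGaussian (p : ℝ[X]) (x : ℝ) : ℝ :=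
  p.eval x * exp (-x ^ 2 / 2)

namespace polyGaussian

lemma X_mul (p : ℝ[X]) (x : ℝ) : polyGaussian (X * p) x = x * polyGaussian p x := by
  simp only [polyGaussian, eval_mul, eval_X, mul_assoc]

lemma hasDerivAt (p : ℝ[X]) (x : ℝ) :
    HasDerivAt (polyGaussian p) (polyGaussian (derivative p - X * p) x) x := by
  have hexp : HasDerivAt (fun x : ℝ => -x ^ 2 / 2) (-x) x :=
    ((hasDerivAt_pow 2 x).neg.div_const 2).congr_deriv (by push_cast; ring)
  refine ((p.hasDerivAt x).mul hexp.exp).congr_deriv ?_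
  simp only [polyGaussian, eval_sub, eval_mul, eval_X]
  ring

lemma differentiable (p : ℝ[X]) : Differentiable ℝ (polyGaussian p) :=
  fun x => (hasDerivAt p x).differentiableAt

lemma deriv_eq (p : ℝ[X]) : deriv (polyGaussian p) = polyGaussian (derivative p - X * p) :=
  funext fun x => (hasDerivAt p x).deriv

lemma integrable (p : ℝ[X]) : Integrable (polyGaussian p) := by
  have h : polyGaussian p = fun x => ∑ i ∈ Finset.range (p.natDegree + 1),
      p.coeff i * (x ^ i * exp (-x ^ 2 / 2)) := by
    funext x
    simp only [polyGaussian, eval_eq_sum_range, Finset.sum_mul, mul_assoc]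
  rw [h]
  exact integrable_finsetSum _ fun i _ => (integrable_pow_mul_exp_neg_sq_div_two i).const_mul _

end polyGaussian

lemma exists_hermiteFun_eq_polyGaussian (n : ℕ) : ∃ p : ℝ[X], hermiteFun n = polyGaussian p := by
  induction n with
  | zero => exact ⟨C (π ^ (-(1 : ℝ) / 4)), by funext x; simp [hermiteFun, polyGaussian]⟩
  | succ n ih =>
    obtain ⟨p, hp⟩ := ih
    refine ⟨C (√(2 * (n + 1)))⁻¹ * (X * p - (derivative p - X * p)), funext fun x => ?_⟩
    rw [hermiteFun, hp, polyGaussian.deriv_eq]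
    simp only [polyGaussian, eval_mul, eval_sub, eval_C, eval_X]
    ring

end

section hermiteFun

variable (n : ℕ)

lemma differentiable_hermiteFun : Differentiable ℝ (hermiteFun n) := by
  obtain ⟨p, hp⟩ := exists_hermiteFun_eq_polyGaussian n
  exact hp ▸ polyGaussian.differentiable p

lemma integrable_hermiteFun : Integrable (hermiteFun n) := by
  obtain ⟨p, hp⟩ := exists_hermiteFun_eq_polyGaussian n
  exact hp ▸ polyGaussian.integrable p

lemma integrable_deriv_hermiteFun : Integrable (deriv (hermiteFun n)) := by
  obtain ⟨p, hp⟩ := exists_hermiteFun_eq_polyGaussian n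
  rw [hp, polyGaussian.deriv_eq]
  exact polyGaussian.integrable _

lemma integrable_mul_hermiteFun : Integrable fun x => x * hermiteFun n x := by
  obtain ⟨p, hp⟩ := exists_hermiteFun_eq_polyGaussian n
  have h : (fun x => x * hermiteFun n x) = polyGaussian (.X * p) :=
    funext fun x => by rw [hp, polyGaussian.X_mul]
  exact h ▸ polyGaussian.integrable _

end hermiteFun

/-- Each Hermite function is an eigenfunction of the unitary Fourier
transform with eigenvalue `(-i)^n`. -/
theorem stmt_1 (n : ℕ) (ω : ℝ) :
    fourierT (fun t => (hermiteFun n t : ℂ)) ω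
      = (-Complex.I) ^ n * (hermiteFun n ω : ℂ) := by
  induction n generalizing ω with
  | zero =>
    simp only [hermiteFun, Complex.ofReal_mul, pow_zero, one_mul, fourierT_const_mul,
      fourierT_gaussian]
  | succ n ih =>
    have hF : fourierT (fun t => (hermiteFun n t : ℂ))
        = fun w => (-I) ^ n * (hermiteFun n w : ℂ) := funext ih
    have hF' : deriv (fourierT fun t => (hermiteFun n t : ℂ)) ω
        = (-I) ^ n * ((deriv (hermiteFun n) ω : ℝ) : ℂ) := by
      rw [hF]
      exact ((differentiable_hermiteFun n ω).hasDerivAt.ofReal_comp.const_mul _).deriv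
    simp only [hermiteFun, Complex.ofReal_mul, fourierT_const_mul]
    rw [fourierT_ofReal_creation (integrable_hermiteFun n) (differentiable_hermiteFun n)
      (integrable_deriv_hermiteFun n) (integrable_mul_hermiteFun n), hF', ih]
    push_cast
    ring
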